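/- For the HD line network with K IAB nodes, backhaul capacity R_b, access capacity R_a, w UEs per BS: the optimal LP value satisfies t*_HD(λ_min, K) = (1 - wλ_min(3/R_b + 1/R_a)) / (2(K+1)/R_b + Kw/R_a) when λ_min ≤ R_a / (4(K+1)(R_a/R_b)² + (2K+3)w(R_a/R_b) + w), and t*_HD(λ_min, K) = (1 - wλ_min((2K-1)/R_b + 1/R_a)) / (2(K+1)/R_b + 2w/R_a) otherwise; i.e., min_{1≤k≤K-1} f_HD(k) equals f_HD(K-1) in the first case and f_HD(1) in the second. -/

import Mathlib

/-!
On interior indices `f_HD(k)` is a linear-fractional function `(A + B k) / (C + E k)` of `k`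
with positive denominator, so it is monotone in `k`, increasing or decreasing according to the
sign of `B C - A E`. That determinant equals `w / R_a² · (λ D - R_a)` with
`D = 4(K+1)(R_a/R_b)² + (2K+3) w R_a/R_b + w`, so the minimum over `1 ≤ k ≤ K - 1` sits at
`k = K - 1` when `λ ≤ R_a / D` and at `k = 1` otherwise.
-/

/-- Bottleneck function `f_HD(k)` for the HD line network. -/
noncomputable def fHD (K w : ℕ) (lam Ra Rb : ℝ) (k : ℕ) : ℝ :=
  if k = 0 then
    (1 - w * lam * (1 / Ra + K / Rb)) / ((K + 1) / Rb + w / Ra)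
  else if k = K then
    (1 - w * lam * (1 / Ra + 1 / Rb)) / ((K + 1) / Rb + w * (K + 1) / Ra)
  else
    (1 - w * lam * (1 / Ra + (2 * ((K : ℝ) - k) + 1) / Rb)) /
      (2 * (K + 1) / Rb + w * (k + 1) / Ra)

theorem div_affine_le_div_affine_of_mul_nonpos {a b c d x y : ℝ}
    (hx : 0 < c + d * x) (hy : 0 < c + d * y) (h : (x - y) * (b * c - a * d) ≤ 0) :
    (a + b * x) / (c + d * x) ≤ (a + b * y) / (c + d * y) := by
  rw [div_le_div_iff₀ hx hy]
  linear_combination h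

section Interior

variable (K w : ℕ) (lam Ra Rb : ℝ)

theorem fHD_eq_div_affine {k : ℕ} (hk0 : k ≠ 0) (hkK : k ≠ K) :
    fHD K w lam Ra Rb k =
      (1 - w * lam * (1 / Ra + (2 * K + 1) / Rb) + 2 * w * lam / Rb * k) /
        (2 * (K + 1) / Rb + w / Ra + w / Ra * k) := by
  simp only [fHD, if_neg hk0, if_neg hkK]
  ring

theorem fHD_det_eq (hRa : Ra ≠ 0) (hRb : Rb ≠ 0) :
    2 * w * lam / Rb * (2 * (K + 1) / Rb + w / Ra) -
        (1 - w * lam * (1 / Ra + (2 * K + 1) / Rb)) * (w / Ra) =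
      w / Ra ^ 2 *
        (lam * (4 * ((K : ℝ) + 1) * (Ra / Rb) ^ 2 + (2 * K + 3) * w * (Ra / Rb) + w) - Ra) := by
  field_simp
  ring

theorem fHD_le_fHD_of_mul_nonpos {i k : ℕ} (hi0 : i ≠ 0) (hiK : i ≠ K) (hk0 : k ≠ 0)
    (hkK : k ≠ K) (hRa : 0 < Ra) (hRb : 0 < Rb)
    (h : ((i : ℝ) - k) *
      (lam * (4 * ((K : ℝ) + 1) * (Ra / Rb) ^ 2 + (2 * K + 3) * w * (Ra / Rb) + w) - Ra) ≤ 0) :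
    fHD K w lam Ra Rb i ≤ fHD K w lam Ra Rb k := by
  rw [fHD_eq_div_affine K w lam Ra Rb hi0 hiK, fHD_eq_div_affine K w lam Ra Rb hk0 hkK]
  apply div_affine_le_div_affine_of_mul_nonpos (by positivity) (by positivity)
  rw [fHD_det_eq K w lam Ra Rb hRa.ne' hRb.ne', mul_left_comm]
  exact mul_nonpos_of_nonneg_of_nonpos (by positivity) h

theorem fHD_pred_eq (hK : 2 ≤ K) :
    fHD K w lam Ra Rb (K - 1) =
      (1 - w * lam * (3 / Rb + 1 / Ra)) / (2 * ((K : ℝ) + 1) / Rb + K * w / Ra) := by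
  simp only [fHD, if_neg (by omega : K - 1 ≠ 0), if_neg (by omega : K - 1 ≠ K),
    Nat.cast_pred (by omega : 0 < K)]
  ring

theorem fHD_one_eq (hK : 2 ≤ K) :
    fHD K w lam Ra Rb 1 =
      (1 - w * lam * ((2 * (K : ℝ) - 1) / Rb + 1 / Ra)) / (2 * ((K : ℝ) + 1) / Rb + 2 * w / Ra) := by
  simp only [fHD, if_neg one_ne_zero, if_neg (by omega : 1 ≠ K), Nat.cast_one]
  ring

end Interior

theorem tstar_HD_closed_form_general
    (K w : ℕ) (hK : 2 ≤ K)
    (lam Ra Rb : ℝ) (hRa : 0 < Ra) (hRb : Ra < Rb) :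
    (lam ≤ Ra / (4 * ((K : ℝ) + 1) * (Ra / Rb) ^ 2 + (2 * K + 3) * w * (Ra / Rb) + w) →
      (∀ k, 1 ≤ k → k ≤ K - 1 → fHD K w lam Ra Rb (K - 1) ≤ fHD K w lam Ra Rb k) ∧
      fHD K w lam Ra Rb (K - 1) =
        (1 - w * lam * (3 / Rb + 1 / Ra)) / (2 * ((K : ℝ) + 1) / Rb + K * w / Ra)) ∧
    (Ra / (4 * ((K : ℝ) + 1) * (Ra / Rb) ^ 2 + (2 * K + 3) * w * (Ra / Rb) + w) < lam →
      (∀ k, 1 ≤ k → k ≤ K - 1 → fHD K w lam Ra Rb 1 ≤ fHD K w lam Ra Rb k) ∧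
      fHD K w lam Ra Rb 1 =
        (1 - w * lam * ((2 * (K : ℝ) - 1) / Rb + 1 / Ra)) /
          (2 * ((K : ℝ) + 1) / Rb + 2 * w / Ra)) := by
  have hRb0 : 0 < Rb := hRa.trans hRb
  have hD : 0 < 4 * ((K : ℝ) + 1) * (Ra / Rb) ^ 2 + (2 * K + 3) * w * (Ra / Rb) + w := by
    positivity
  refine ⟨fun hle => ⟨fun k hk1 hk2 => ?_, fHD_pred_eq K w lam Ra Rb hK⟩,
    fun hlt => ⟨fun k hk1 hk2 => ?_, fHD_one_eq K w lam Ra Rb hK⟩⟩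
  · rw [le_div_iff₀ hD] at hle
    have hkK : (k : ℝ) ≤ (K - 1 : ℕ) := by exact_mod_cast hk2
    exact fHD_le_fHD_of_mul_nonpos K w lam Ra Rb (by omega) (by omega) (by omega) (by omega)
      hRa hRb0 (mul_nonpos_of_nonneg_of_nonpos (by linarith) (by linarith))
  · rw [div_lt_iff₀ hD] at hlt
    have hk : (1 : ℝ) ≤ k := by exact_mod_cast hk1
    exact fHD_le_fHD_of_mul_nonpos K w lam Ra Rb one_ne_zero (by omega) (by omega) (by omega)
      hRa hRb0 (mul_nonpos_of_nonpos_of_nonneg (by push_cast; linarith) (by linarith))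

/-- `t*_HD(λ_min, K)`: the minimum of `f_HD` over interior indices `1 ≤ k ≤ K-1`
is attained at `k = K-1` with value `(1 - wλ(3/R_b + 1/R_a))/(2(K+1)/R_b + Kw/R_a)`
when `λ ≤ R_a/(4(K+1)(R_a/R_b)² + (2K+3)w(R_a/R_b) + w)`, and at `k = 1` with value
`(1 - wλ((2K-1)/R_b + 1/R_a))/(2(K+1)/R_b + 2w/R_a)` otherwise. -/
theorem tstar_HD_closed_form
    (K w : ℕ) (hK : 2 ≤ K) (hw : 1 ≤ w)
    (lam Ra Rb : ℝ) (hlam : 0 < lam) (hRa : 0 < Ra) (hRb : Ra < Rb)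
    (hnum : 0 < 1 - (w : ℝ) * lam * (1 / Ra + (2 * (K : ℝ) - 1) / Rb)) :
    (lam ≤ Ra / (4 * ((K : ℝ) + 1) * (Ra / Rb) ^ 2 + (2 * K + 3) * w * (Ra / Rb) + w) →
      (∀ k, 1 ≤ k → k ≤ K - 1 → fHD K w lam Ra Rb (K - 1) ≤ fHD K w lam Ra Rb k) ∧
      fHD K w lam Ra Rb (K - 1) =
        (1 - w * lam * (3 / Rb + 1 / Ra)) / (2 * ((K : ℝ) + 1) / Rb + K * w / Ra)) ∧
    (Ra / (4 * ((K : ℝ) + 1) * (Ra / Rb) ^ 2 + (2 * K + 3) * w * (Ra / Rb) + w) < lam →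
      (∀ k, 1 ≤ k → k ≤ K - 1 → fHD K w lam Ra Rb 1 ≤ fHD K w lam Ra Rb k) ∧
      fHD K w lam Ra Rb 1 =
        (1 - w * lam * ((2 * (K : ℝ) - 1) / Rb + 1 / Ra)) /
          (2 * ((K : ℝ) + 1) / Rb + 2 * w / Ra)) :=
  tstar_HD_closed_form_general K w hK lam Ra Rb hRa hRb
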